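/- arXiv:2301.02629 — 2 statements merged into one kernel-verified Lean document; each statement's English description precedes it below -/
import Mathlib

section
/- Let A be a commutative Noetherian ring, let p be a prime ideal of A, and let a ∈ A be an element whose image in the localization A_p is a nonzerodivisor. Then there exists g ∈ A with g ∉ p such that the image of a in the localization A_g (localization away from g) is a nonzerodivisor in A_g. -/
/-!
The image of `a` in a localization `M⁻¹A` is a nonzerodivisor exactly when the annihilator
ideal `Ann(a)` localizes to zero there. Over a Noetherian ring `Ann(a)` is a finite module, so
its support `V(Ann(Ann(a)))` is closed: if `Ann(a)_p = 0`, then some `g ∈ Ann(Ann(a))` lies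
outside `p`, and `Ann(a)_g = 0`.
-/

open scoped nonZeroDivisors

namespace IsLocalization

variable {R : Type*} [CommRing R] (M : Submonoid R) (S : Type*) [CommRing S] [Algebra R S]
  [IsLocalization M S]

theorem algebraMap_mem_nonZeroDivisors_iff {a : R} :
    algebraMap R S a ∈ S⁰ ↔ ∀ x : R, x * a = 0 → ∃ m ∈ M, m * x = 0 := by
  refine ⟨fun ha x hx ↦ ?_, fun h ↦ mem_nonZeroDivisors_iff_right.mpr fun z hz ↦ ?_⟩
  · have : algebraMap R S x = 0 := ha.2 _ (by rw [← map_mul, hx, map_zero])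
    obtain ⟨m, hm⟩ := (map_eq_zero_iff M S x).mp this
    exact ⟨m, m.2, hm⟩
  · obtain ⟨⟨x, s⟩, rfl⟩ := mk'_surjective M z
    rw [mul_comm, mul_mk'_eq_mk'_of_mul, mk'_eq_zero_iff] at hz
    obtain ⟨c, hc⟩ := hz
    obtain ⟨m, hm, hmcx⟩ := h (c * x) (by rw [mul_assoc, mul_comm x, hc])
    exact (mk'_eq_zero_iff x s).mpr ⟨⟨m * c, M.mul_mem hm c.2⟩, by rw [mul_assoc, hmcx]⟩

theorem algebraMap_mem_nonZeroDivisors_iff_subsingleton {a : R} :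
    algebraMap R S a ∈ S⁰ ↔
      Subsingleton (LocalizedModule M (R ∙ a).annihilator) := by
  rw [algebraMap_mem_nonZeroDivisors_iff M S, LocalizedModule.subsingleton_iff]
  simp

end IsLocalization

/-- Let `A` be a commutative Noetherian ring, `p` a prime ideal of `A`, and `a ∈ A` an element
whose image in the localization `A_p` is a nonzerodivisor. Then there exists `g ∈ A` with
`g ∉ p` such that the image of `a` in the localization `A_g` (localization away from `g`) is a
nonzerodivisor in `A_g`. -/
theorem stmt2 {A : Type*} [CommRing A] [IsNoetherianRing A] (p : Ideal A) [p.IsPrime] (a : A)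
    (ha : algebraMap A (Localization.AtPrime p) a ∈
      nonZeroDivisors (Localization.AtPrime p)) :
    ∃ g : A, g ∉ p ∧ algebraMap A (Localization.Away g) a ∈
      nonZeroDivisors (Localization.Away g) := by
  have hAnnp : Subsingleton (LocalizedModule p.primeCompl (A ∙ a).annihilator) :=
    (IsLocalization.algebraMap_mem_nonZeroDivisors_iff_subsingleton _ _).mp ha
  obtain ⟨g, hg, hAnn⟩ := LocalizedModule.exists_subsingleton_away (M := (A ∙ a).annihilator) p
  exact ⟨g, hg, (IsLocalization.algebraMap_mem_nonZeroDivisors_iff_subsingleton _ _).mpr hAnn⟩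
end

section
/- Let R be a commutative ring whose prime spectrum Spec R is a connected topological space, and let S be a nonzero commutative R-algebra that is finitely generated as an R-module and is a Noetherian ring. Assume that the induced continuous map f : Spec S → Spec R is an open map. Then for every connected component T of Spec S, the image f(T) is all of Spec R. -/
open TopologicalSpace

lemma isOpen_connectedComponent_of_noetherian {α : Type*} [TopologicalSpace α]
    [NoetherianSpace α] (x : α) : IsOpen (connectedComponent x) := by
  rw [← isClosed_compl_iff]
  have key : (connectedComponent x)ᶜ =
      ⋃ Z ∈ {Z ∈ irreducibleComponents α | Disjoint Z (connectedComponent x)}, Z := by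
    ext y
    simp only [Set.mem_compl_iff, Set.mem_iUnion, Set.mem_setOf_eq]
    constructor
    · intro hy
      refine ⟨irreducibleComponent y, ⟨⟨irreducibleComponent_mem_irreducibleComponents y, ?_⟩,
        mem_irreducibleComponent⟩⟩
      rw [Set.disjoint_left]
      intro z hz hz'
      have h1 : irreducibleComponent y ⊆ connectedComponent x := by
        have h2 := (isIrreducible_irreducibleComponent (x := y)
          ).isConnected.subset_connectedComponent hz
        rwa [← connectedComponent_eq hz'] at h2
      exact hy (h1 mem_irreducibleComponent)
    · rintro ⟨Z, ⟨⟨-, hdisj⟩, hyZ⟩⟩ hy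
      exact Set.disjoint_left.mp hdisj hyZ hy
  rw [key]
  refine Set.Finite.isClosed_biUnion
    (NoetherianSpace.finite_irreducibleComponents.subset (Set.sep_subset _ _)) ?_
  intro Z hZ
  exact isClosed_of_mem_irreducibleComponents Z hZ.1

/-- Let `R` be a commutative ring with `Spec R` connected, and let `S` be a nonzero commutative
`R`-algebra that is finitely generated as an `R`-module and Noetherian as a ring. If the induced
map `f : Spec S → Spec R` is open, then for every connected component `T` of `Spec S` the image
`f(T)` is all of `Spec R`. -/
theorem stmt7 {R S : Type*} [CommRing R] [CommRing S] [Algebra R S] [Nontrivial S]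
    [Module.Finite R S] [IsNoetherianRing S] [ConnectedSpace (PrimeSpectrum R)]
    (hopen : IsOpenMap (PrimeSpectrum.comap (algebraMap R S))) :
    ∀ x : PrimeSpectrum S,
      PrimeSpectrum.comap (algebraMap R S) '' connectedComponent x = Set.univ := by
  intro x
  have hint : (algebraMap R S).IsIntegral := fun s =>
    (Algebra.IsIntegral.of_finite R S).isIntegral s
  have hclosedmap := PrimeSpectrum.isClosedMap_comap_of_isIntegral _ hint
  have hclopen : IsClopen (PrimeSpectrum.comap (algebraMap R S) '' connectedComponent x) :=
    ⟨hclosedmap _ isClosed_connectedComponent,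
     hopen _ (isOpen_connectedComponent_of_noetherian x)⟩
  exact hclopen.eq_univ ⟨_, ⟨x, mem_connectedComponent, rfl⟩⟩
end
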